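/- arXiv:2204.10269 — 3 statements merged into one kernel-verified Lean document; each statement's English description precedes it below -/
import Mathlib

section
/- Let d ≥ 1, let μ be the normalized (probability) Haar measure on the unitary group U(d), and let e₀ ∈ ℂ^d be a fixed unit vector. Then for every complex d×d matrix A, ∫_{U(d)} |⟨W e₀, A (W e₀)⟩|² dμ(W) = (|Tr(A)|² + Tr(A A†)) / (d(d+1)). -/
/-!
Write `ψ = W e₀` and `M i j k l = 𝔼[conj ψᵢ ψⱼ ψₖ conj ψₗ]`; the integrand expands as
`∑ A i j * conj (A k l) * M i j k l`. Left invariance of `μ` makes `M` invariant under every unitary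
change of coordinates. Diagonal phases kill `M i j k l` unless `(i, l)` is a rearrangement of
`(j, k)`, permutations make `a = M x x x x` independent of `x`, and a real reflection mixing two
coordinates `x ≠ y` gives `a = 2 M x x y y`. With `∑ M x x y y = 𝔼 ‖ψ‖⁴ = 1` this forces
`M i j k l = (δᵢⱼ δₖₗ + δᵢₖ δⱼₗ) / (d (d + 1))`, and summing against `A i j * conj (A k l)` gives
`|Tr A|² + Tr (A Aᴴ)` in the numerator.
-/

open MeasureTheory Matrix

noncomputable instance {m : Type*} [Fintype m] [DecidableEq m] :
    MeasurableSpace (Matrix.unitaryGroup m ℂ) := borel _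

open Finset
open scoped ComplexConjugate

namespace Matrix

def quarticMonomial {n : Type*} (v : n → ℂ) (i j k l : n) : ℂ :=
  conj (v i) * v j * v k * conj (v l)

variable {n : Type*} [Fintype n]

theorem conj_sum_mul_sum_mul_sum_mul_conj_sum (a b c d : n → ℂ) :
    conj (∑ i, a i) * (∑ j, b j) * (∑ k, c k) * conj (∑ l, d l) =
      ∑ i, ∑ j, ∑ k, ∑ l, conj (a i) * b j * c k * conj (d l) := by
  simp only [map_sum, ← mul_sum, ← sum_mul]

theorem quarticMonomial_mulVec (U : Matrix n n ℂ) (v : n → ℂ) (p q r s : n) :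
    quarticMonomial (U *ᵥ v) p q r s =
      ∑ i, ∑ j, ∑ k, ∑ l, conj (U p i) * U q j * U r k * conj (U s l) *
        quarticMonomial v i j k l := by
  simp only [quarticMonomial, mulVec, dotProduct, conj_sum_mul_sum_mul_sum_mul_conj_sum, map_mul]
  simp only [mul_comm, mul_assoc, mul_left_comm]

theorem dotProduct_mulVec_mul_conj (A : Matrix n n ℂ) (v : n → ℂ) :
    (star v ⬝ᵥ (A *ᵥ v)) * conj (star v ⬝ᵥ (A *ᵥ v)) =
      ∑ i, ∑ j, ∑ k, ∑ l, A i j * conj (A k l) * quarticMonomial v i j k l := by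
  have h : star v ⬝ᵥ (A *ᵥ v) = ∑ i, ∑ j, conj (v i) * A i j * v j := by
    simp only [dotProduct, mulVec, mul_sum, Pi.star_apply, RCLike.star_def, mul_assoc]
  rw [h]
  calc _
      = ∑ i, ∑ j, ∑ k, ∑ l, conj (v i) * A i j * v j * conj (conj (v k) * A k l * v l) := by
        simp only [map_sum, ← mul_sum, ← sum_mul]
    _ = _ := by
      simp only [quarticMonomial, map_mul, Complex.conj_conj, mul_comm, mul_left_comm]

variable [DecidableEq n]

theorem trace_mul_conj_trace_add_trace_mul_conjTranspose (A : Matrix n n ℂ) :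
    A.trace * conj A.trace + (A * Aᴴ).trace =
      ∑ i, ∑ j, ∑ k, ∑ l, A i j * conj (A k l) *
        ((if i = j then 1 else 0) * (if k = l then 1 else 0) +
          (if i = k then 1 else 0) * (if j = l then 1 else 0)) := by
  simp only [trace, diag, map_sum, sum_mul_sum, mul_apply, conjTranspose_apply, RCLike.star_def,
    mul_add, sum_add_distrib, mul_ite, mul_one, mul_zero, sum_ite_eq, mem_univ, if_true,
    sum_ite_irrel, sum_const_zero]

instance : BorelSpace (unitaryGroup n ℂ) := ⟨rfl⟩

instance : CompactSpace (unitaryGroup n ℂ) := by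
  refine isCompact_iff_compactSpace.mp <| IsCompact.of_isClosed_subset
    (isCompact_univ_pi fun (_ : n) => isCompact_univ_pi fun (_ : n) =>
      isCompact_closedBall (0 : ℂ) 1) (isClosed_unitary (R := Matrix n n ℂ)) ?_
  exact fun _ hU i _ j _ => by simpa using entry_norm_bound_of_unitary hU i j

section UnitaryGroup

variable {α : Type*} [CommRing α] [StarRing α]

theorem diagonal_mem_unitaryGroup {z : n → α} (hz : ∀ i, z i * star (z i) = 1) :
    diagonal z ∈ unitaryGroup n α := by
  rw [mem_unitaryGroup_iff, star_eq_conjTranspose, diagonal_conjTranspose,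
    diagonal_mul_diagonal, ← diagonal_one]
  exact congrArg diagonal (funext hz)

theorem permMatrix_mem_unitaryGroup (σ : Equiv.Perm n) :
    σ.permMatrix α ∈ unitaryGroup n α := by
  rw [mem_unitaryGroup_iff, star_eq_conjTranspose, conjTranspose_permMatrix, ← permMatrix_mul,
    inv_mul_cancel, permMatrix_one]

end UnitaryGroup

theorem one_sub_smul_vecMulVec_mem_unitaryGroup {𝕜 : Type*} [RCLike 𝕜] (w : n → 𝕜) {r : ℝ}
    (hr : (r : 𝕜) * (star w ⬝ᵥ w) = 2) :
    1 - (r : 𝕜) • vecMulVec w (star w) ∈ unitaryGroup n 𝕜 := by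
  have hsq : vecMulVec w (star w) * vecMulVec w (star w) =
      (star w ⬝ᵥ w) • vecMulVec w (star w) := by
    rw [vecMulVec_mul_vecMulVec, vecMulVec_smul]
  rw [mem_unitaryGroup_iff, star_eq_conjTranspose, conjTranspose_sub, conjTranspose_one,
    conjTranspose_smul, conjTranspose_vecMulVec, star_star, RCLike.star_def, RCLike.conj_ofReal,
    sub_mul, mul_sub, mul_sub, one_mul, mul_one, one_mul, smul_mul_smul_comm, hsq, smul_smul,
    show (r : 𝕜) * r * (star w ⬝ᵥ w) = 2 * r by linear_combination (r : 𝕜) * hr]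
  module

variable (μ : Measure (unitaryGroup n ℂ)) (e₀ : n → ℂ)

noncomputable def quarticMoment (i j k l : n) : ℂ :=
  ∫ W : unitaryGroup n ℂ, quarticMonomial ((W : Matrix n n ℂ) *ᵥ e₀) i j k l ∂μ

theorem quarticMoment_swap_middle (i j k l : n) :
    quarticMoment μ e₀ i j k l = quarticMoment μ e₀ i k j l := by
  unfold quarticMoment quarticMonomial
  congr 1 with W
  ring

theorem integral_sum_quarticMonomial [IsFiniteMeasure μ] (C : n → n → n → n → ℂ) :
    ∫ W : unitaryGroup n ℂ, ∑ i, ∑ j, ∑ k, ∑ l,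
        C i j k l * quarticMonomial ((W : Matrix n n ℂ) *ᵥ e₀) i j k l ∂μ =
      ∑ i, ∑ j, ∑ k, ∑ l, C i j k l * quarticMoment μ e₀ i j k l := by
  have hint {f : unitaryGroup n ℂ → ℂ} (hf : Continuous f) : Integrable f μ :=
    hf.integrable_of_hasCompactSupport (.of_compactSpace _)
  simp only [quarticMoment, ← integral_const_mul]
  simp (disch := exact fun _ _ => hint (by unfold quarticMonomial; fun_prop)) only
    [integral_finsetSum]

theorem sum_quarticMoment_diag [IsProbabilityMeasure μ] (he₀ : star e₀ ⬝ᵥ e₀ = 1) :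
    ∑ x, ∑ y, quarticMoment μ e₀ x x y y = 1 := by
  have hnorm (W : unitaryGroup n ℂ) :
      star ((W : Matrix n n ℂ) *ᵥ e₀) ⬝ᵥ ((W : Matrix n n ℂ) *ᵥ e₀) = 1 := by
    rw [star_mulVec, ← dotProduct_mulVec, mulVec_mulVec, ← star_eq_conjTranspose,
      UnitaryGroup.star_mul_self, one_mulVec, he₀]
  have hsq (v : n → ℂ) : ∑ i, ∑ j, ∑ k, ∑ l,
      (if i = j ∧ k = l then 1 else 0) * quarticMonomial v i j k l =
        (star v ⬝ᵥ v) * (star v ⬝ᵥ v) := by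
    simp only [ite_and, ite_mul, one_mul, zero_mul, sum_ite_irrel, sum_const_zero, sum_ite_eq,
      mem_univ, if_true, dotProduct, sum_mul_sum, quarticMonomial, Pi.star_apply, RCLike.star_def]
    exact sum_congr rfl fun i _ => sum_congr rfl fun k _ => by ring
  calc ∑ x, ∑ y, quarticMoment μ e₀ x x y y
      = ∑ i, ∑ j, ∑ k, ∑ l, (if i = j ∧ k = l then 1 else 0) * quarticMoment μ e₀ i j k l := by
        simp only [ite_and, ite_mul, one_mul, zero_mul, sum_ite_irrel, sum_const_zero, sum_ite_eq,
          mem_univ, if_true]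
    _ = 1 := by
      rw [← integral_sum_quarticMonomial]
      simp only [hsq, hnorm, mul_one]
      simp

variable [μ.IsMulLeftInvariant]

theorem integral_comp_unitary_mulVec {E : Type*} [NormedAddCommGroup E] [NormedSpace ℝ E]
    (f : (n → ℂ) → E) (U : unitaryGroup n ℂ) :
    ∫ W : unitaryGroup n ℂ, f ((U : Matrix n n ℂ) *ᵥ ((W : Matrix n n ℂ) *ᵥ e₀)) ∂μ =
      ∫ W : unitaryGroup n ℂ, f ((W : Matrix n n ℂ) *ᵥ e₀) ∂μ := by
  simpa [mulVec_mulVec] using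
    integral_mul_left_eq_self (fun W : unitaryGroup n ℂ => f ((W : Matrix n n ℂ) *ᵥ e₀)) U

theorem quarticMoment_eq_sum_unitary [IsFiniteMeasure μ] (U : unitaryGroup n ℂ) (p q r s : n) :
    quarticMoment μ e₀ p q r s =
      ∑ i, ∑ j, ∑ k, ∑ l, conj ((U : Matrix n n ℂ) p i) * (U : Matrix n n ℂ) q j *
        (U : Matrix n n ℂ) r k * conj ((U : Matrix n n ℂ) s l) * quarticMoment μ e₀ i j k l := by
  rw [quarticMoment, ← integral_comp_unitary_mulVec μ e₀ (fun v => quarticMonomial v p q r s) U]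
  simp only [quarticMonomial_mulVec (U : Matrix n n ℂ)]
  exact integral_sum_quarticMonomial μ e₀ _

theorem quarticMoment_phase {z : n → ℂ} (hz : ∀ p, z p * conj (z p) = 1) (i j k l : n) :
    quarticMoment μ e₀ i j k l =
      conj (z i) * z j * z k * conj (z l) * quarticMoment μ e₀ i j k l := by
  unfold quarticMoment
  rw [← integral_const_mul, ← integral_comp_unitary_mulVec μ e₀
    (fun v => quarticMonomial v i j k l) ⟨diagonal z, diagonal_mem_unitaryGroup hz⟩]
  congr 1 with W
  simp only [quarticMonomial, mulVec_diagonal, map_mul]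
  ring

theorem quarticMoment_perm (σ : Equiv.Perm n) (i j k l : n) :
    quarticMoment μ e₀ (σ i) (σ j) (σ k) (σ l) = quarticMoment μ e₀ i j k l := by
  unfold quarticMoment
  rw [← integral_comp_unitary_mulVec μ e₀
    (fun v => quarticMonomial v i j k l) ⟨σ.permMatrix ℂ, permMatrix_mem_unitaryGroup σ⟩]
  simp only [permMatrix_mulVec]
  rfl

theorem quarticMoment_eq_zero_of_phase {z : n → ℂ} (hz : ∀ p, z p * conj (z p) = 1)
    {i j k l : n} (hne : conj (z i) * z j * z k * conj (z l) ≠ 1) :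
    quarticMoment μ e₀ i j k l = 0 :=
  (mul_left_eq_self₀.mp (quarticMoment_phase μ e₀ hz i j k l).symm).resolve_left hne

theorem quarticMoment_eq_zero {i j k l : n} (h : ¬(i = j ∧ k = l ∨ i = k ∧ j = l)) :
    quarticMoment μ e₀ i j k l = 0 := by
  -- Put the phase `I` at an index `p` occurring a different number of times in `(i, l)` and in
  -- `(j, k)`: it scales the moment by a nontrivial power of `I`.
  have key (p : n) (hp : conj (if i = p then Complex.I else 1) * (if j = p then Complex.I else 1) *
      (if k = p then Complex.I else 1) * conj (if l = p then Complex.I else 1) ≠ 1) :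
      quarticMoment μ e₀ i j k l = 0 :=
    quarticMoment_eq_zero_of_phase μ e₀ (z := fun q => if q = p then Complex.I else 1)
      (fun q => by split_ifs <;> simp) hp
  by_cases hij : i = j
  · have hkl : k ≠ l := fun hkl => h (.inl ⟨hij, hkl⟩)
    apply key k
    subst hij
    by_cases hik : i = k <;> simp [hik, hkl.symm, Complex.ext_iff]
  by_cases hik : i = k
  · have hjl : j ≠ l := fun hjl => h (.inr ⟨hik, hjl⟩)
    apply key j
    subst hik
    simp [hij, hjl.symm, Complex.ext_iff]
  apply key i
  by_cases hil : l = i <;> norm_num [Ne.symm hij, Ne.symm hik, hil, Complex.ext_iff]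

theorem quarticMoment_diag_eq_two_mul [IsFiniteMeasure μ] {x y : n} (hxy : x ≠ y) :
    quarticMoment μ e₀ x x x x = 2 * quarticMoment μ e₀ x x y y := by
  set w : n → ℂ := Pi.single x 1 - Pi.single y 2
  have hw : ((2 / 5 : ℝ) : ℂ) * (star w ⬝ᵥ w) = 2 := by
    norm_num [w, dotProduct, Pi.single_apply, sub_mul, mul_sub, hxy, hxy.symm, map_ofNat]
  set U : unitaryGroup n ℂ := ⟨_, one_sub_smul_vecMulVec_mem_unitaryGroup w (r := 2 / 5) hw⟩
  have hrow : (U : Matrix n n ℂ) x = Pi.single x (3 / 5) + Pi.single y (4 / 5) := by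
    ext i
    simp only [U, w, sub_apply, one_apply, smul_apply, vecMulVec_apply, Pi.add_apply,
      Pi.sub_apply, Pi.star_apply, Pi.single_apply]
    rcases eq_or_ne i x with rfl | hix
    · norm_num [hxy, map_ofNat]
    rcases eq_or_ne i y with rfl | hiy
    · norm_num [hix, hix.symm, map_ofNat]
    simp [hix, hiy, hix.symm]
  have hyyyy := quarticMoment_perm μ e₀ (Equiv.swap x y) x x x x
  have hyyxx := quarticMoment_perm μ e₀ (Equiv.swap x y) x x y y
  simp only [Equiv.swap_apply_left, Equiv.swap_apply_right] at hyyyy hyyxx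
  -- `h` reads `a = (337 a + 576 b) / 625` for `a = M x x x x`, `b = M x x y y`.
  have h := quarticMoment_eq_sum_unitary μ e₀ U x x x x
  simp only [hrow, Pi.add_apply, Pi.single_apply, map_add, apply_ite (starRingEnd ℂ), map_div₀,
    map_ofNat, map_zero, mul_add, mul_ite, add_mul, ite_mul, zero_mul, mul_zero, sum_add_distrib,
    sum_ite_eq', mem_univ, ↓reduceIte] at h
  simp (disch := simp [hxy, hxy.symm]) only [quarticMoment_eq_zero μ e₀, mul_zero, add_zero,
    zero_add] at h
  rw [quarticMoment_swap_middle μ e₀ x y x y, quarticMoment_swap_middle μ e₀ y x y x, hyyyy,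
    hyyxx] at h
  linear_combination (625 / 288 : ℂ) * h

theorem quarticMoment_eq [IsProbabilityMeasure μ] (he₀ : star e₀ ⬝ᵥ e₀ = 1) (i j k l : n) :
    quarticMoment μ e₀ i j k l =
      ((if i = j then 1 else 0) * (if k = l then 1 else 0) +
        (if i = k then 1 else 0) * (if j = l then 1 else 0)) /
        (Fintype.card n * (Fintype.card n + 1)) := by
  have hpair (x y : n) : quarticMoment μ e₀ x x y y =
      (1 + if x = y then 1 else 0) * quarticMoment μ e₀ x x x x / 2 := by
    by_cases h : x = y
    · subst h; rw [if_pos rfl]; ring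
    · rw [quarticMoment_diag_eq_two_mul μ e₀ h]; simp [h]
  have hconst (x y : n) : quarticMoment μ e₀ y y y y = quarticMoment μ e₀ x x x x := by
    simpa using quarticMoment_perm μ e₀ (Equiv.swap x y) x x x x
  have hdiag (x : n) :
      quarticMoment μ e₀ x x x x = 2 / (Fintype.card n * (Fintype.card n + 1)) := by
    have hsum := sum_quarticMoment_diag μ e₀ he₀
    rw [sum_congr rfl fun y _ => sum_congr rfl fun z _ =>
      (hpair y z).trans (by rw [hconst x y])] at hsum
    have hcount : ∑ y : n, ∑ z : n, (1 + if y = z then 1 else 0 : ℂ) =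
        Fintype.card n * (Fintype.card n + 1) := by
      simp [sum_add_distrib, mul_add]
    simp only [mul_div_assoc, ← sum_mul, hcount] at hsum
    rw [eq_div_iff (left_ne_zero_of_mul_eq_one hsum)]
    linear_combination 2 * hsum
  by_cases h : i = j ∧ k = l ∨ i = k ∧ j = l
  · rcases h with ⟨rfl, rfl⟩ | ⟨rfl, rfl⟩
    · rw [hpair, hdiag]
      rcases eq_or_ne i k with rfl | hik
      · simp only [↓reduceIte]; ring
      · simp only [↓reduceIte, if_neg hik]; ring
    · rw [quarticMoment_swap_middle, hpair, hdiag]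
      rcases eq_or_ne i j with rfl | hij
      · simp only [↓reduceIte]; ring
      · simp only [↓reduceIte, if_neg hij]; ring
  · rw [quarticMoment_eq_zero μ e₀ h]
    split_ifs <;> simp_all

end Matrix

theorem haar_second_moment_fidelity_general (d : ℕ)
    (μ : Measure (Matrix.unitaryGroup (Fin d) ℂ))
    [IsProbabilityMeasure μ] [μ.IsMulLeftInvariant]
    (e₀ : Fin d → ℂ) (he₀ : star e₀ ⬝ᵥ e₀ = 1)
    (A : Matrix (Fin d) (Fin d) ℂ) :
    ∫ W : Matrix.unitaryGroup (Fin d) ℂ,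
        ‖star ((W : Matrix (Fin d) (Fin d) ℂ) *ᵥ e₀) ⬝ᵥ
          (A *ᵥ ((W : Matrix (Fin d) (Fin d) ℂ) *ᵥ e₀))‖ ^ 2 ∂μ
      = (‖A.trace‖ ^ 2 + (A * Aᴴ).trace.re) / (d * (d + 1)) := by
  have htr : (((A * Aᴴ).trace.re : ℝ) : ℂ) = (A * Aᴴ).trace := by
    rw [← Complex.conj_eq_iff_re, ← RCLike.star_def, ← trace_conjTranspose, conjTranspose_mul,
      conjTranspose_conjTranspose]
  apply Complex.ofReal_injective
  calc _ = ∫ W : unitaryGroup (Fin d) ℂ, ∑ i, ∑ j, ∑ k, ∑ l, A i j * conj (A k l) *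
          quarticMonomial ((W : Matrix (Fin d) (Fin d) ℂ) *ᵥ e₀) i j k l ∂μ := by
        rw [← integral_complex_ofReal]
        push_cast
        simp only [← Complex.mul_conj', dotProduct_mulVec_mul_conj]
    _ = ∑ i, ∑ j, ∑ k, ∑ l, A i j * conj (A k l) * quarticMoment μ e₀ i j k l :=
        integral_sum_quarticMonomial μ e₀ _
    _ = (A.trace * conj A.trace + (A * Aᴴ).trace) / (d * (d + 1)) := by
        simp only [quarticMoment_eq μ e₀ he₀, Fintype.card_fin, ← mul_div_assoc, ← sum_div,
          trace_mul_conj_trace_add_trace_mul_conjTranspose]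
    _ = _ := by
        rw [Complex.mul_conj', ← htr]
        push_cast
        rfl

/-- second moment of Haar-random pure states:
`∫ |⟨We₀, A We₀⟩|² dμ(W) = (|Tr A|² + Tr(A A†)) / (d(d+1))`. -/
theorem haar_second_moment_fidelity (d : ℕ) (hd : 1 ≤ d)
    (μ : Measure (Matrix.unitaryGroup (Fin d) ℂ))
    [IsProbabilityMeasure μ] [μ.IsMulLeftInvariant]
    (e₀ : Fin d → ℂ) (he₀ : star e₀ ⬝ᵥ e₀ = 1)
    (A : Matrix (Fin d) (Fin d) ℂ) :
    ∫ W : Matrix.unitaryGroup (Fin d) ℂ,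
        ‖star ((W : Matrix (Fin d) (Fin d) ℂ) *ᵥ e₀) ⬝ᵥ
          (A *ᵥ ((W : Matrix (Fin d) (Fin d) ℂ) *ᵥ e₀))‖ ^ 2 ∂μ
      = (‖A.trace‖ ^ 2 + (A * Aᴴ).trace.re) / (d * (d + 1)) :=
  haar_second_moment_fidelity_general d μ e₀ he₀ A
end

section
/- Let n ≥ 1, let ψ₁, …, ψₙ be unit vectors in ℂ², let Ψ_P = ψ₁ ⊗ ⋯ ⊗ ψₙ ∈ (ℂ²)^{⊗n}, and let Φ ∈ (ℂ²)^{⊗n} be any unit vector. Then 1 − (1/n) Σᵢ ⟨Φ, (ψᵢψᵢ† ⊗ 𝟙_ī) Φ⟩ ≤ 1 − |⟨Ψ_P, Φ⟩|² ≤ n · (1 − (1/n) Σᵢ ⟨Φ, (ψᵢψᵢ† ⊗ 𝟙_ī) Φ⟩). -/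
/-!
Complete each `ψᵢ` to the orthonormal basis `bᵢ(0) = ψᵢ`, `bᵢ(1) = ψᵢ^⊥` of `ℂ²` and expand `Φ` in
the product basis `⊗ᵢ bᵢ(sᵢ)`, `s ∈ {0,1}ⁿ`, whose vector at `s = 0` is `Ψ_P`. The weights
`r s = |⟨⊗ᵢ bᵢ(sᵢ), Φ⟩|²` form a probability distribution, `|⟨Ψ_P, Φ⟩|² = r 0` and
`⟨Φ, (ψᵢψᵢ† ⊗ 𝟙_ī) Φ⟩ = P(sᵢ = 0)`. The two inequalities then say `P(s = 0) ≤ P(sᵢ = 0)` for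
every `i`, and the union bound `P(s ≠ 0) ≤ ∑ᵢ P(sᵢ ≠ 0)`.
-/

open Matrix Finset

/-- The operator `ψᵢψᵢ† ⊗ 𝟙_ī` on `(ℂ²)^{⊗n}`, identified with the matrix on
`(Fin n → Fin 2) → ℂ` acting as the rank-one projection onto `ψ i` on the `i`-th
tensor factor and as the identity on all other factors. -/
noncomputable def localProj {n : ℕ} (ψ : Fin n → Fin 2 → ℂ) (i : Fin n) :
    Matrix (Fin n → Fin 2) (Fin n → Fin 2) ℂ :=
  fun x y => ψ i (x i) * (starRingEnd ℂ) (ψ i (y i)) *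
    (if Function.update x i (y i) = y then 1 else 0)

theorem sum_mul_star_of_mem_unitaryGroup {κ α : Type*} [Fintype κ] [DecidableEq κ] [CommRing α]
    [StarRing α] {U : Matrix κ κ α} (hU : U ∈ unitaryGroup κ α) (x y : κ) :
    ∑ a, U x a * star (U y a) = if x = y then 1 else 0 := by
  simpa [mul_apply, one_apply] using congrFun₂ (mem_unitaryGroup_iff.mp hU) x y

section ProductBasis

variable {ι κ : Type*} [Fintype ι] [Fintype κ]

def productVector (v : ι → κ → ℂ) (x : ι → κ) : ℂ := ∏ i, v i (x i)

/-- The orthogonal projection onto the span of the product vectors `⊗ᵢ (U i)ᵀ (s i)` with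
`s ∈ Fintype.piFinset t`, when every `U i` is unitary. -/
def productSpanProj (U : ι → Matrix κ κ ℂ) (t : ι → Finset κ) : Matrix (ι → κ) (ι → κ) ℂ :=
  of fun x y => ∏ i, ∑ a ∈ t i, U i (x i) a * star (U i (y i) a)

theorem sum_piFinset_norm_sq_dotProduct_productVector [DecidableEq ι]
    (U : ι → Matrix κ κ ℂ) (t : ι → Finset κ) (Φ : (ι → κ) → ℂ) :
    ∑ s ∈ Fintype.piFinset t, ‖star (productVector fun i => (U i)ᵀ (s i)) ⬝ᵥ Φ‖ ^ 2
      = (star Φ ⬝ᵥ (productSpanProj U t *ᵥ Φ)).re := by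
  have hterm : ∀ s : ι → κ,
      ((‖star (productVector fun i => (U i)ᵀ (s i)) ⬝ᵥ Φ‖ ^ 2 : ℝ) : ℂ)
        = ∑ x, ∑ y, star (Φ x) * Φ y * ∏ i, U i (x i) (s i) * star (U i (y i) (s i)) := by
    intro s
    rw [Complex.ofReal_pow, ← Complex.mul_conj', mul_comm]
    simp only [dotProduct, map_sum, map_mul, sum_mul_sum, productVector, transpose_apply,
      Pi.star_apply, star_prod, prod_mul_distrib, Complex.star_def, Complex.conj_conj, map_prod]
    refine sum_congr rfl fun x _ => sum_congr rfl fun y _ => ?_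
    ring
  suffices h : ((∑ s ∈ Fintype.piFinset t,
      ‖star (productVector fun i => (U i)ᵀ (s i)) ⬝ᵥ Φ‖ ^ 2 : ℝ) : ℂ)
        = star Φ ⬝ᵥ (productSpanProj U t *ᵥ Φ) by
    rw [← h, Complex.ofReal_re]
  rw [Complex.ofReal_sum, sum_congr rfl fun s _ => hterm s, sum_comm]
  simp only [dotProduct, mulVec, productSpanProj, of_apply, mul_sum]
  refine sum_congr rfl fun x _ => ?_
  rw [sum_comm]
  refine sum_congr rfl fun y _ => ?_
  rw [prod_univ_sum, sum_mul, mul_sum]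
  refine sum_congr rfl fun s _ => ?_
  simp only [Pi.star_apply]
  ring

theorem productSpanProj_univ [DecidableEq κ] {U : ι → Matrix κ κ ℂ}
    (hU : ∀ i, U i ∈ unitaryGroup κ ℂ) :
    productSpanProj U (fun _ => univ) = 1 := by
  ext x y
  simp only [productSpanProj, of_apply, fun i => sum_mul_star_of_mem_unitaryGroup (hU i),
    Fintype.prod_boole, one_apply, funext_iff]

theorem productSpanProj_update_singleton [DecidableEq ι] [DecidableEq κ] {U : ι → Matrix κ κ ℂ}
    (hU : ∀ i, U i ∈ unitaryGroup κ ℂ) (i : ι) (a : κ) :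
    productSpanProj U (Function.update (fun _ => univ) i {a})
      = of fun x y => (U i)ᵀ a (x i) * star ((U i)ᵀ a (y i)) *
          if Function.update x i (y i) = y then 1 else 0 := by
  ext x y
  rw [productSpanProj, of_apply, of_apply, ← mul_prod_erase univ _ (mem_univ i)]
  congr 1
  · simp
  · rw [prod_congr rfl fun j hj => by rw [Function.update_of_ne (ne_of_mem_erase hj),
      sum_mul_star_of_mem_unitaryGroup (hU j)]]
    simp [prod_boole, Function.update_eq_iff]

end ProductBasis

def qubitUnitary (v : Fin 2 → ℂ) : Matrix (Fin 2) (Fin 2) ℂ :=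
  !![v 0, -star (v 1); v 1, star (v 0)]

theorem qubitUnitary_transpose_zero (v : Fin 2 → ℂ) : (qubitUnitary v)ᵀ 0 = v := by
  ext x; fin_cases x <;> rfl

theorem qubitUnitary_mem_unitaryGroup {v : Fin 2 → ℂ} (hv : star v ⬝ᵥ v = 1) :
    qubitUnitary v ∈ unitaryGroup (Fin 2) ℂ := by
  rw [mem_unitaryGroup_iff']
  ext x y
  fin_cases x <;> fin_cases y <;>
    simp [qubitUnitary, dotProduct, mul_apply, Fin.sum_univ_two] at hv ⊢
  · linear_combination hv
  · ring
  · ring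
  · linear_combination hv

section Distribution

variable {ι κ : Type*} [Fintype ι] [Fintype κ] [DecidableEq ι] [DecidableEq κ]

theorem sum_filter_ne_le_sum_sum_filter_apply_ne {r : (ι → κ) → ℝ} (hr : 0 ≤ r) (z : ι → κ) :
    ∑ s with s ≠ z, r s ≤ ∑ i, ∑ s with s i ≠ z i, r s := by
  simp only [sum_filter]
  rw [sum_comm]
  refine sum_le_sum fun s _ => ?_
  split_ifs with hs
  · obtain ⟨i, hi⟩ := Function.ne_iff.mp hs
    calc r s = if s i ≠ z i then r s else 0 := (if_pos hi).symm
      _ ≤ _ := single_le_sum (f := fun j => if s j ≠ z j then r s else 0)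
        (fun j _ => ite_nonneg (hr s) le_rfl) (mem_univ i)
  · exact sum_nonneg fun i _ => ite_nonneg (hr s) le_rfl

theorem one_sub_apply_le_sum_one_sub_sum_filter {r : (ι → κ) → ℝ} (hr : 0 ≤ r)
    (hr_one : ∑ s, r s = 1) (z : ι → κ) :
    1 - r z ≤ ∑ i, (1 - ∑ s with s i = z i, r s) := by
  have hcompl : ∀ (p : (ι → κ) → Prop) [DecidablePred p],
      1 - ∑ s with p s, r s = ∑ s with ¬ p s, r s := by
    intro p _
    rw [← hr_one, ← sum_filter_add_sum_filter_not univ p r]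
    ring
  calc 1 - r z = ∑ s with s ≠ z, r s := by rw [← hcompl (· = z), sum_filter, sum_ite_eq']; simp
    _ ≤ ∑ i, ∑ s with s i ≠ z i, r s := sum_filter_ne_le_sum_sum_filter_apply_ne hr z
    _ = ∑ i, (1 - ∑ s with s i = z i, r s) := by simp only [hcompl]

end Distribution

theorem one_sub_mean_le_and_le_mul_one_sub_mean {n : ℕ} (hn : 1 ≤ n) {p : ℝ} {m : Fin n → ℝ}
    (hp : ∀ i, p ≤ m i) (hunion : 1 - p ≤ ∑ i, (1 - m i)) :
    1 - (1 / n) * ∑ i, m i ≤ 1 - p ∧ 1 - p ≤ n * (1 - (1 / n) * ∑ i, m i) := by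
  have hn_pos : (0 : ℝ) < n := by exact_mod_cast hn
  have hmean : n * p ≤ ∑ i, m i := by
    simpa using sum_le_sum (s := univ) fun i _ => hp i
  constructor
  · have : p ≤ (1 / n) * ∑ i, m i := by
      rw [one_div, inv_mul_eq_div, le_div_iff₀ hn_pos]
      linarith
    linarith
  · convert hunion using 1
    rw [sum_sub_distrib]
    field_simp
    simp

/-- pointwise global-versus-local loss comparison: for unit vectors
`ψ₁, …, ψₙ ∈ ℂ²` with product `Ψ_P = ψ₁ ⊗ ⋯ ⊗ ψₙ` and any unit vector `Φ`,
`1 − (1/n)Σᵢ⟨Φ,(ψᵢψᵢ†⊗𝟙_ī)Φ⟩ ≤ 1 − |⟨Ψ_P,Φ⟩|² ≤ n·(1 − (1/n)Σᵢ⟨Φ,(ψᵢψᵢ†⊗𝟙_ī)Φ⟩)`. -/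
theorem global_vs_local_loss_pointwise (n : ℕ) (hn : 1 ≤ n)
    (ψ : Fin n → Fin 2 → ℂ) (hψ : ∀ i, star (ψ i) ⬝ᵥ ψ i = 1)
    (ΨP : (Fin n → Fin 2) → ℂ) (hΨP : ΨP = fun x => ∏ i, ψ i (x i))
    (Φ : (Fin n → Fin 2) → ℂ) (hΦ : star Φ ⬝ᵥ Φ = 1) :
    1 - (1 / n) * ∑ i, (star Φ ⬝ᵥ (localProj ψ i *ᵥ Φ)).re
        ≤ 1 - ‖star ΨP ⬝ᵥ Φ‖ ^ 2 ∧
      1 - ‖star ΨP ⬝ᵥ Φ‖ ^ 2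
        ≤ n * (1 - (1 / n) * ∑ i, (star Φ ⬝ᵥ (localProj ψ i *ᵥ Φ)).re) := by
  set U := fun i => qubitUnitary (ψ i)
  have hU : ∀ i, U i ∈ unitaryGroup (Fin 2) ℂ := fun i => qubitUnitary_mem_unitaryGroup (hψ i)
  set r : (Fin n → Fin 2) → ℝ := fun s => ‖star (productVector fun i => (U i)ᵀ (s i)) ⬝ᵥ Φ‖ ^ 2
  have hr : 0 ≤ r := fun s => by positivity
  have hr_one : ∑ s, r s = 1 := by
    have := sum_piFinset_norm_sq_dotProduct_productVector U (fun _ => univ) Φ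
    rwa [Fintype.piFinset_univ, productSpanProj_univ hU, one_mulVec, hΦ, Complex.one_re] at this
  have hlocal : ∀ i, (star Φ ⬝ᵥ (localProj ψ i *ᵥ Φ)).re = ∑ s with s i = 0, r s := by
    intro i
    have := sum_piFinset_norm_sq_dotProduct_productVector U
      (Function.update (fun _ => univ) i {0}) Φ
    rw [productSpanProj_update_singleton hU, qubitUnitary_transpose_zero,
      Fintype.piFinset_update_singleton_eq_filter_piFinset_eq (fun _ => univ) i (mem_univ 0),
      Fintype.piFinset_univ] at this
    exact this.symm
  have hglobal : ‖star ΨP ⬝ᵥ Φ‖ ^ 2 = r 0 := by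
    simp only [r, U, Pi.zero_apply, qubitUnitary_transpose_zero, hΨP]
    rfl
  rw [hglobal]
  simp only [hlocal]
  exact one_sub_mean_le_and_le_mul_one_sub_mean hn
    (fun i => single_le_sum (fun s _ => hr s) (by simp))
    (one_sub_apply_le_sum_one_sub_sum_filter hr hr_one 0)
end

section
/- Let G be a d×d complex Hermitian matrix with G² = I, let ρ and O be arbitrary d×d complex matrices, and define f : ℝ → ℂ by f(θ) = Tr(O · exp(−iθG/2) · ρ · exp(iθG/2)). Then f is differentiable and for all θ, f′(θ) = (1/2)·(f(θ + π/2) − f(θ − π/2)). -/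
/-!
For an involution `G`, the exponential series splits into even and odd parts, giving
`exp (z • G) = cosh z • 1 + sinh z • G`. Conjugating `ρ` by `exp (∓ iθ/2 • G)` therefore yields
`(1 + cos θ)/2 • ρ + (1 - cos θ)/2 • GρG + (i sin θ)/2 • (ρG - Gρ)`, so `f θ = a + b cos θ + c sin θ`.
For such functions `f (θ ± π/2) = a ∓ b sin θ ± c cos θ`, whose half-difference is `f' θ`.
-/

open Matrix Real

section

variable {A : Type*} [NormedRing A] [NormedAlgebra ℂ A] [CompleteSpace A] {x : A}

theorem NormedSpace.exp_smul_of_mul_self_eq_one (hx : x * x = 1) (z : ℂ) :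
    NormedSpace.exp (z • x) = Complex.cosh z • (1 : A) + Complex.sinh z • x := by
  have hpow (n : ℕ) : x ^ (2 * n) = 1 := by rw [pow_mul, sq, hx, one_pow]
  refine (NormedSpace.exp_series_hasSum_exp' (𝕂 := ℂ) (z • x)).unique
    (HasSum.even_add_odd ?_ ?_)
  · convert (Complex.hasSum_cosh z).smul_const (1 : A) using 2 with n
    rw [smul_pow, hpow, smul_smul, div_eq_inv_mul]
  · convert (Complex.hasSum_sinh z).smul_const x using 2 with n
    rw [smul_pow, pow_succ x, hpow, one_mul, smul_smul, div_eq_inv_mul]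

theorem NormedSpace.exp_conj_of_mul_self_eq_one (hx : x * x = 1) (y : A) (t : ℂ) :
    NormedSpace.exp ((-(Complex.I * t) / 2) • x) * y * NormedSpace.exp ((Complex.I * t / 2) • x) =
      ((1 + Complex.cos t) / 2) • y + ((1 - Complex.cos t) / 2) • (x * y * x) +
        (Complex.I * Complex.sin t / 2) • (y * x - x * y) := by
  obtain ⟨s, rfl⟩ : ∃ s, t = 2 * s := ⟨t / 2, by ring⟩
  have hneg : -(Complex.I * (2 * s)) / 2 = -s * Complex.I := by ring
  have hpos : Complex.I * (2 * s) / 2 = s * Complex.I := by ring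
  rw [hneg, hpos, exp_smul_of_mul_self_eq_one hx, exp_smul_of_mul_self_eq_one hx,
    Complex.cosh_mul_I, Complex.sinh_mul_I, Complex.cosh_mul_I, Complex.sinh_mul_I,
    Complex.cos_neg, Complex.sin_neg, Complex.cos_two_mul, Complex.sin_two_mul]
  simp only [add_mul, mul_add, smul_mul_assoc, mul_smul_comm, one_mul, mul_one, smul_smul,
    mul_assoc, smul_sub, smul_add]
  match_scalars
  · ring
  · ring
  · ring
  · linear_combination (-Complex.sin s ^ 2) * Complex.I_sq + Complex.sin_sq_add_cos_sq s

end

theorem hasDerivAt_parameterShift {g : ℝ → ℂ} {a b c : ℂ}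
    (hg : ∀ t : ℝ, g t = a + b * Complex.cos t + c * Complex.sin t) (θ : ℝ) :
    HasDerivAt g ((1 / 2) * (g (θ + π / 2) - g (θ - π / 2))) θ := by
  have hshift : (1 / 2) * (g (θ + π / 2) - g (θ - π / 2)) =
      -b * Complex.sin θ + c * Complex.cos θ := by
    simp only [hg]
    push_cast
    rw [Complex.cos_add, Complex.sin_add, Complex.cos_sub, Complex.sin_sub,
      Complex.cos_pi_div_two, Complex.sin_pi_div_two]
    ring
  rw [hshift, funext hg]
  exact (((((Complex.hasDerivAt_cos θ).comp_ofReal).const_mul b).const_add a).add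
    (((Complex.hasDerivAt_sin θ).comp_ofReal).const_mul c)).congr_deriv (by ring)

theorem Matrix.exp_conj_of_mul_self_eq_one {m : Type*} [Fintype m] [DecidableEq m]
    {x : Matrix m m ℂ} (hx : x * x = 1) (y : Matrix m m ℂ) (t : ℂ) :
    NormedSpace.exp ((-(Complex.I * t) / 2) • x) * y * NormedSpace.exp ((Complex.I * t / 2) • x) =
      ((1 + Complex.cos t) / 2) • y + ((1 - Complex.cos t) / 2) • (x * y * x) +
        (Complex.I * Complex.sin t / 2) • (y * x - x * y) := by
  -- any norm inducing the product topology will do: `NormedSpace.exp` depends only on the topology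
  let _ : NormedRing (Matrix m m ℂ) := Matrix.linftyOpNormedRing
  let _ : NormedAlgebra ℂ (Matrix m m ℂ) := Matrix.linftyOpNormedAlgebra
  exact NormedSpace.exp_conj_of_mul_self_eq_one hx y t

theorem parameter_shift_rule_general (d : ℕ)
    (G ρ O : Matrix (Fin d) (Fin d) ℂ)
    (hG2 : G * G = 1)
    (f : ℝ → ℂ)
    (hf : f = fun θ : ℝ =>
      (O * NormedSpace.exp ((-(Complex.I * (θ : ℂ)) / 2) • G) * ρ *
        NormedSpace.exp (((Complex.I * (θ : ℂ)) / 2) • G)).trace) :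
    Differentiable ℝ f ∧
      ∀ θ : ℝ, HasDerivAt f ((1 / 2) * (f (θ + π / 2) - f (θ - π / 2))) θ := by
  have hf_trig (θ : ℝ) : f θ = ((O * ρ).trace + (O * G * ρ * G).trace) / 2
      + ((O * ρ).trace - (O * G * ρ * G).trace) / 2 * Complex.cos θ
      + Complex.I * ((O * ρ * G).trace - (O * G * ρ).trace) / 2 * Complex.sin θ := by
    rw [hf]
    dsimp only
    rw [mul_assoc O, mul_assoc O, Matrix.exp_conj_of_mul_self_eq_one hG2]
    simp only [Matrix.mul_add, Matrix.mul_sub, Matrix.mul_smul, trace_add, trace_sub,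
      trace_smul, smul_eq_mul, mul_assoc]
    ring
  have hderiv := hasDerivAt_parameterShift hf_trig
  exact ⟨fun θ => (hderiv θ).differentiableAt, hderiv⟩

/-- parameter-shift rule: for Hermitian `G` with `G² = I` and
`f(θ) = Tr(O · exp(−iθG/2) · ρ · exp(iθG/2))`, the function `f` is differentiable with
`f′(θ) = (1/2)·(f(θ + π/2) − f(θ − π/2))`. -/
theorem parameter_shift_rule (d : ℕ)
    (G ρ O : Matrix (Fin d) (Fin d) ℂ)
    (hG : G.IsHermitian) (hG2 : G * G = 1)
    (f : ℝ → ℂ)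
    (hf : f = fun θ : ℝ =>
      (O * NormedSpace.exp ((-(Complex.I * (θ : ℂ)) / 2) • G) * ρ *
        NormedSpace.exp (((Complex.I * (θ : ℂ)) / 2) • G)).trace) :
    Differentiable ℝ f ∧
      ∀ θ : ℝ, HasDerivAt f ((1 / 2) * (f (θ + π / 2) - f (θ - π / 2))) θ :=
  parameter_shift_rule_general d G ρ O hG2 f hf
end
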